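/- Let H = (V, E) be a hypergraph containing two distinct cycles C₁ and C₂ that share a common vertex. Then H contains two distinct minimal cycles C₁′ and C₂′ that share a common vertex. -/

import Mathlib

variable {V : Type*} [Fintype V] [DecidableEq V] [Nonempty V]

/-- Two vertices are adjacent if some edge contains both. -/
def Adj (E : Finset (Finset V)) (u w : V) : Prop := ∃ e ∈ E, u ∈ e ∧ w ∈ e

/-- A hypergraph is connected if any two vertices are joined by a path
(equivalently, by a walk, i.e. a chain of adjacencies). -/
def HConnected (E : Finset (Finset V)) : Prop :=
  ∀ u w : V, Relation.ReflTransGen (Adj E) u w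

/-- A hypergraph is 3-uniform if every edge has exactly 3 vertices. -/
def Uniform3 (E : Finset (Finset V)) : Prop := ∀ e ∈ E, e.card = 3

/-- A cycle `v₁e₁v₂e₂…vₖeₖv₁` (k ≥ 2) in the hypergraph with edge set `E`:
distinct vertices, distinct edges, and `{vᵢ, vᵢ₊₁} ⊆ eᵢ` with indices mod k. -/
structure HCycle (E : Finset (Finset V)) where
  k : ℕ
  two_le : 2 ≤ k
  v : ZMod k → V
  e : ZMod k → Finset V
  v_inj : Function.Injective v
  e_inj : Function.Injective e
  e_mem : ∀ i, e i ∈ E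
  mem_left : ∀ i, v i ∈ e i
  mem_right : ∀ i, v (i + 1) ∈ e i

def HasCycle (E : Finset (Finset V)) : Prop := Nonempty (HCycle E)

/-- A hypertree is a connected acyclic hypergraph. -/
def IsHypertree (E : Finset (Finset V)) : Prop := HConnected E ∧ ¬ HasCycle E

/-- A vertex cover is a set of vertices meeting every edge. -/
def IsVertexCover (E : Finset (Finset V)) (S : Finset V) : Prop :=
  ∀ e ∈ E, ∃ x ∈ S, x ∈ e

/-- The vertex cover number τ: minimum cardinality of a vertex cover. -/
noncomputable def coverNum (E : Finset (Finset V)) : ℕ :=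
  sInf {n | ∃ S : Finset V, IsVertexCover E S ∧ S.card = n}

/-- A matching is a set of pairwise disjoint edges. -/
def IsMatching (E : Finset (Finset V)) (M : Finset (Finset V)) : Prop :=
  M ⊆ E ∧ ∀ e ∈ M, ∀ f ∈ M, e ≠ f → Disjoint e f

/-- The matching number ν: maximum cardinality of a matching. -/
noncomputable def matchNum (E : Finset (Finset V)) : ℕ :=
  sSup {n | ∃ M : Finset (Finset V), IsMatching E M ∧ M.card = n}

/-- A perfect matching is a matching covering every vertex. -/
def HasPerfectMatching (E : Finset (Finset V)) : Prop :=
  ∃ M : Finset (Finset V), IsMatching E M ∧ ∀ x : V, ∃ e ∈ M, x ∈ e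

/-- The degree of a vertex: the number of edges containing it. -/
def hdegree (E : Finset (Finset V)) (x : V) : ℕ := (E.filter fun e => x ∈ e).card

/-- The number of connected components of the hypergraph with vertex set `S`
and edge set `E`: the number of equivalence classes of vertices of `S` under
the equivalence generated by adjacency. -/
noncomputable def numComponents (S : Finset V) (E : Finset (Finset V)) : ℕ :=
  Nat.card (Quotient (Setoid.comap (Subtype.val : {x // x ∈ S} → V)
    (Relation.EqvGen.setoid (Adj E))))

/-- `C` is a connected component of the hypergraph with vertex set `S` and edge
set `E` : a nonempty subset of `S`, closed under reachability, any two of whose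
vertices are joined by a path. -/
def IsComponent (S : Finset V) (E : Finset (Finset V)) (C : Finset V) : Prop :=
  C ⊆ S ∧ C.Nonempty ∧
  (∀ x ∈ C, ∀ y ∈ S, Relation.ReflTransGen (Adj E) x y → y ∈ C) ∧
  (∀ x ∈ C, ∀ y ∈ C, Relation.ReflTransGen (Adj E) x y)

/-- A cycle is minimal if any two non-adjacent edges of it are disjoint. -/
def IsMinimalCycle {E : Finset (Finset V)} (C : HCycle E) : Prop :=
  ∀ i j : ZMod C.k, j ≠ i → j ≠ i + 1 → i ≠ j + 1 → Disjoint (C.e i) (C.e j)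

/-- Two cycles share a common vertex. -/
def ShareVertex {E : Finset (Finset V)} (C₁ C₂ : HCycle E) : Prop :=
  ∃ x : V, (∃ i, x ∈ C₁.e i) ∧ (∃ j, x ∈ C₂.e j)

/-! A cycle that is not minimal has two non-adjacent edges `e i`, `e j` with a common vertex `x`.
If `x` is not on the cycle, the runs of consecutive edges `e i, …, e j` and `e j, …, e i` each close
up through `x` into a shorter cycle. If `x = v m`, pick `p ∈ {i, j}` with `m ∉ {p, p + 1}`; then the
runs `e m, …, e p` and `e p, …, e (m - 1)` close up through `x`. In both cases the second run starts
with the last edge of the first, so the two new cycles share a vertex, and the edge following the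
first run lies in the second run only, so they are distinct. Splitting a non-minimal one of the two
given cycles lowers the larger of their lengths, so the process ends at two minimal cycles. -/

lemma ZMod.add_natCast_injOn {k : ℕ} (a : ZMod k) :
    Set.InjOn (fun s : ℕ => a + s) (Set.Iio k) := fun s hs t ht h => by
  have h := add_left_cancel h
  rwa [ZMod.natCast_eq_natCast_iff', Nat.mod_eq_of_lt hs, Nat.mod_eq_of_lt ht] at h

lemma ZMod.exists_eq_add_natCast_of_ne {k : ℕ} [NeZero k] {x y : ZMod k} (h : x ≠ y) :
    ∃ m n : ℕ, 0 < m ∧ 0 < n ∧ m + n = k ∧ y = x + m ∧ x = y + n := by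
  have hlt := ZMod.val_lt (y - x)
  have hpos : 0 < (y - x).val := Nat.pos_of_ne_zero (by simpa [sub_eq_zero] using h.symm)
  refine ⟨(y - x).val, k - (y - x).val, hpos, by omega, by omega, by simp, ?_⟩
  rw [Nat.cast_sub hlt.le, ZMod.natCast_self, ZMod.natCast_zmod_val]
  ring

namespace HCycle

variable {α : Type*} {E : Finset (Finset α)}

def ofFun (n : ℕ) (hn : 2 ≤ n) (v : ℕ → α) (e : ℕ → Finset α)
    (hv : Set.InjOn v (Set.Iio n)) (he : Set.InjOn e (Set.Iio n))
    (heE : ∀ s < n, e s ∈ E) (hl : ∀ s < n, v s ∈ e s)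
    (hr : ∀ s < n, v ((s + 1) % n) ∈ e s) : HCycle E :=
  haveI : NeZero n := ⟨by omega⟩
  { k := n
    two_le := hn
    v := fun i => v i.val
    e := fun i => e i.val
    v_inj := fun i j h => ZMod.val_injective n (hv (ZMod.val_lt i) (ZMod.val_lt j) h)
    e_inj := fun i j h => ZMod.val_injective n (he (ZMod.val_lt i) (ZMod.val_lt j) h)
    e_mem := fun i => heE _ (ZMod.val_lt i)
    mem_left := fun i => hl _ (ZMod.val_lt i)
    mem_right := fun i => by
      have : Fact (1 < n) := ⟨hn⟩
      simpa only [ZMod.val_add, ZMod.val_one] using hr _ (ZMod.val_lt i) }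

lemma range_ofFun_e (n hn v e hv he heE hl hr) :
    Set.range (ofFun (E := E) n hn v e hv he heE hl hr).e = e '' Set.Iio n := by
  have : NeZero n := ⟨by omega⟩
  ext f
  constructor
  · rintro ⟨i, rfl⟩
    exact ⟨ZMod.val (n := n) i, ZMod.val_lt (n := n) i, rfl⟩
  · rintro ⟨s, hs, rfl⟩
    refine ⟨(s : ZMod n), ?_⟩
    show e (s : ZMod n).val = e s
    rw [ZMod.val_cast_of_lt hs]

def arc (C : HCycle E) (a : ZMod C.k) (ℓ : ℕ) : Set (Finset α) :=
  (fun s : ℕ => C.e (a + s)) '' Set.Iio ℓ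

lemma e_add_mem_arc (C : HCycle E) (a : ZMod C.k) {s ℓ : ℕ} (hs : s < ℓ) :
    C.e (a + s) ∈ C.arc a ℓ :=
  ⟨s, hs, rfl⟩

lemma e_add_notMem_arc (C : HCycle E) (a : ZMod C.k) {n ℓ : ℕ} (hℓ : ℓ ≤ n) (hn : n < C.k) :
    C.e (a + n) ∉ C.arc a ℓ := by
  rintro ⟨s, hs, h⟩
  rw [Set.mem_Iio] at hs
  have := ZMod.add_natCast_injOn a (show s < C.k by omega) hn (C.e_inj h)
  omega

/-- The edges `e a, …, e (a + n)` of `C` form a cycle on their own once the two end vertices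
`v a` and `v (a + n + 1)` are replaced by one vertex `x` lying in both end edges. -/
lemma exists_range_eq_arc (C : HCycle E) (a : ZMod C.k) {n : ℕ} (hn : 0 < n) (hnk : n < C.k)
    {x : α} (hxa : x ∈ C.e a) (hxn : x ∈ C.e (a + n))
    (hx : ∀ s : ℕ, 0 < s → s ≤ n → C.v (a + s) ≠ x) :
    ∃ A : HCycle E, A.k = n + 1 ∧ Set.range A.e = C.arc a (n + 1) := by
  have hinj : Set.InjOn (fun s : ℕ => a + s) (Set.Iio (n + 1)) :=
    (ZMod.add_natCast_injOn a).mono (Set.Iio_subset_Iio (by omega))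
  refine ⟨ofFun (n + 1) (by omega) (fun s => if s = 0 then x else C.v (a + s))
    (fun s => C.e (a + s)) ?_ (C.e_inj.comp_injOn hinj) (fun s _ => C.e_mem _) ?_ ?_,
    rfl, range_ofFun_e ..⟩
  · intro s hs t ht h
    simp only [Set.mem_Iio] at hs ht h
    split_ifs at h with hs0 ht0 ht0
    · omega
    · exact absurd h.symm (hx t (by omega) (by omega))
    · exact absurd h (hx s (by omega) (by omega))
    · exact hinj hs ht (C.v_inj h)
  · intro s _
    split_ifs with hs0
    · simpa [hs0] using hxa
    · exact C.mem_left _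
  · intro s hs
    rcases Nat.lt_succ_iff_lt_or_eq.mp hs with hs | rfl
    · rw [Nat.mod_eq_of_lt (by omega), if_neg (by omega), Nat.cast_succ, ← add_assoc]
      exact C.mem_right _
    · simpa using hxn

lemma arc_ne_and_shareVertex {C A B : HCycle E} {a : ZMod C.k} {m n : ℕ} (hn : 0 < n)
    (hm : m + 1 < C.k) (hA : Set.range A.e = C.arc a (m + 1))
    (hB : Set.range B.e = C.arc (a + m) (n + 1)) :
    Set.range A.e ≠ Set.range B.e ∧ ShareVertex A B := by
  refine ⟨fun h => ?_, ?_⟩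
  · have hmem := C.e_add_mem_arc (a + m) (s := 1) (ℓ := n + 1) (by omega)
    rw [← hB, ← h, hA, add_assoc, ← Nat.cast_add] at hmem
    exact C.e_add_notMem_arc a le_rfl hm hmem
  · obtain ⟨i, hi⟩ : C.e (a + m) ∈ Set.range A.e := hA ▸ C.e_add_mem_arc a (by omega)
    obtain ⟨j, hj⟩ : C.e (a + m) ∈ Set.range B.e :=
      hB ▸ by simpa using C.e_add_mem_arc (a + m) (s := 0) (ℓ := n + 1) (by omega)
    exact ⟨C.v (a + m), ⟨i, hi ▸ C.mem_left _⟩, ⟨j, hj ▸ C.mem_left _⟩⟩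

lemma exists_split_of_chord (C : HCycle E) {p m : ZMod C.k} (hmp : m ≠ p) (hmp1 : m ≠ p + 1)
    (hm : C.v m ∈ C.e p) :
    ∃ A B : HCycle E, A.k < C.k ∧ B.k < C.k ∧
      Set.range A.e ≠ Set.range B.e ∧ ShareVertex A B := by
  have : NeZero C.k := ⟨by have := C.two_le; omega⟩
  obtain ⟨n₁, n₂, hn₁, hn₂, hk, rfl, hp⟩ := ZMod.exists_eq_add_natCast_of_ne hmp.symm
  obtain ⟨n, rfl⟩ : ∃ n, n₁ = n + 1 := ⟨n₁ - 1, by omega⟩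
  have hn : 0 < n := Nat.pos_of_ne_zero (by rintro rfl; simp at hmp1)
  obtain ⟨A, hAk, hA⟩ := C.exists_range_eq_arc p hn (by omega) hm
    (by rw [Nat.cast_succ, ← add_assoc]; exact C.mem_right _)
    (fun s _ _ h => by
      have := ZMod.add_natCast_injOn p (show s < C.k by omega) (show n + 1 < C.k by omega)
        (C.v_inj h)
      omega)
  obtain ⟨B, hBk, hB⟩ := C.exists_range_eq_arc (p + (n + 1 : ℕ)) hn₂ (by omega) (C.mem_left _)
    (by rwa [← hp])
    (fun s _ _ h => by
      have := ZMod.add_natCast_injOn (p + ((n + 1 : ℕ) : ZMod C.k)) (show s < C.k by omega)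
        (show 0 < C.k by omega) (by simpa using C.v_inj h)
      omega)
  exact ⟨B, A, by omega, by omega, arc_ne_and_shareVertex hn (by omega) hB (by rwa [← hp])⟩

lemma exists_split_of_outside_vertex (C : HCycle E) {i j : ZMod C.k} (hji : j ≠ i)
    (hji1 : j ≠ i + 1) (hij1 : i ≠ j + 1) {y : α} (hy : y ∉ Set.range C.v)
    (hyi : y ∈ C.e i) (hyj : y ∈ C.e j) :
    ∃ A B : HCycle E, A.k < C.k ∧ B.k < C.k ∧
      Set.range A.e ≠ Set.range B.e ∧ ShareVertex A B := by
  have : NeZero C.k := ⟨by have := C.two_le; omega⟩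
  obtain ⟨n₁, n₂, hn₁, hn₂, hk, rfl, hi⟩ := ZMod.exists_eq_add_natCast_of_ne hji.symm
  have h₁ : n₁ ≠ 1 := by rintro rfl; simp at hji1
  have h₂ : n₂ ≠ 1 := by rintro rfl; exact hij1 (by simpa using hi)
  obtain ⟨A, hAk, hA⟩ := C.exists_range_eq_arc i hn₁ (by omega) hyi hyj
    (fun _ _ _ h => hy ⟨_, h⟩)
  obtain ⟨B, hBk, hB⟩ := C.exists_range_eq_arc _ hn₂ (by omega) hyj (hi ▸ hyi)
    (fun _ _ _ h => hy ⟨_, h⟩)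
  exact ⟨A, B, by omega, by omega, arc_ne_and_shareVertex hn₂ (by omega) hA hB⟩

lemma exists_split_of_not_isMinimalCycle (C : HCycle E) (hC : ¬ IsMinimalCycle C) :
    ∃ A B : HCycle E, A.k < C.k ∧ B.k < C.k ∧
      Set.range A.e ≠ Set.range B.e ∧ ShareVertex A B := by
  obtain ⟨i, j, hji, hji1, hij1, hij⟩ : ∃ i j : ZMod C.k, j ≠ i ∧ j ≠ i + 1 ∧ i ≠ j + 1 ∧
      ¬ Disjoint (C.e i) (C.e j) := by
    simpa [IsMinimalCycle] using hC
  obtain ⟨y, hyi, hyj⟩ := Finset.not_disjoint_iff.mp hij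
  by_cases hy : y ∈ Set.range C.v
  · obtain ⟨m, rfl⟩ := hy
    by_cases hm : m = i ∨ m = i + 1
    · refine C.exists_split_of_chord (p := j) ?_ ?_ hyj <;> rcases hm with rfl | rfl
      exacts [hji.symm, fun h => hji1 h.symm, hij1, fun h => hji (add_right_cancel h).symm]
    · push Not at hm
      exact C.exists_split_of_chord hm.1 hm.2 hyi
  · exact C.exists_split_of_outside_vertex hji hji1 hij1 hy hyi hyj

end HCycle

/-- If a hypergraph has two distinct cycles sharing a common
vertex, then it has two distinct minimal cycles sharing a common vertex. -/
theorem stmt8 (E : Finset (Finset V)) (C₁ C₂ : HCycle E)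
    (hne : Set.range C₁.e ≠ Set.range C₂.e) (hshare : ShareVertex C₁ C₂) :
    ∃ D₁ D₂ : HCycle E, IsMinimalCycle D₁ ∧ IsMinimalCycle D₂ ∧
      Set.range D₁.e ≠ Set.range D₂.e ∧ ShareVertex D₁ D₂ := by
  induction h : max C₁.k C₂.k using Nat.strong_induction_on generalizing C₁ C₂ with
  | _ n ih =>
    by_cases h₁ : IsMinimalCycle C₁
    · by_cases h₂ : IsMinimalCycle C₂
      · exact ⟨C₁, C₂, h₁, h₂, hne, hshare⟩
      · obtain ⟨A, B, hA, hB, hAB, hsh⟩ := C₂.exists_split_of_not_isMinimalCycle h₂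
        exact ih _ (by omega) A B hAB hsh rfl
    · obtain ⟨A, B, hA, hB, hAB, hsh⟩ := C₁.exists_split_of_not_isMinimalCycle h₁
      exact ih _ (by omega) A B hAB hsh rfl
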